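/- arXiv:2304.11788 — 4 statements merged into one kernel-verified Lean document; each statement's English description precedes it below -/
import Mathlib

section
/- There exists a function f: ℝ → ℝ that satisfies the μ-PL condition for some μ > 0 but is not convex. Concretely, f(x) = x² + 3 sin²(x) satisfies the PL condition with μ = 1/32 but is not convex on ℝ. -/
open Real

lemma pl_key_nonneg : ∀ x : ℝ, 0 ≤ x →
    (1/16) * (x ^ 2 + 3 * Real.sin x ^ 2) ≤ (2 * x + 6 * Real.sin x * Real.cos x) ^ 2 := by
  intro x hx
  have hs1 := Real.sin_le_one x
  have hsn1 := Real.neg_one_le_sin x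
  rcases le_or_gt x (Real.pi / 2) with hA | hA
  · have hsx : Real.sin x ≤ x := Real.sin_le hx
    have hs0 : 0 ≤ Real.sin x := Real.sin_nonneg_of_nonneg_of_le_pi hx
      (hA.trans (by linarith [Real.pi_pos]))
    have hc0 : 0 ≤ Real.cos x := Real.cos_nonneg_of_mem_Icc ⟨by linarith [Real.pi_pos], hA⟩
    nlinarith [sq_nonneg (Real.sin x), mul_nonneg hs0 hc0, sq_nonneg x, sq_nonneg (x - Real.sin x)]
  rcases le_or_gt x 2 with hB | hB
  · have hpi := Real.pi_gt_d6
    have hpi2 := Real.pi_lt_d2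
    have h2x : Real.sin (2 * x - Real.pi) ≤ 2 * x - Real.pi := Real.sin_le (by linarith)
    have h2 : -(2 * Real.sin x * Real.cos x) ≤ 2 * x - Real.pi := by
      rw [← Real.sin_two_mul]
      have := Real.sin_sub_pi (2 * x)
      linarith
    have hd : 3 * Real.pi - 4 * x ≤ 2 * x + 6 * Real.sin x * Real.cos x := by linarith
    have hd0 : (0:ℝ) < 3 * Real.pi - 8 := by linarith
    nlinarith [sq_nonneg (Real.sin x)]
  · have h2 : -3 ≤ 6 * Real.sin x * Real.cos x := by
      have := Real.sin_two_mul x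
      have := Real.neg_one_le_sin (2 * x)
      nlinarith
    nlinarith [sq_nonneg (Real.sin x)]

lemma pl_key : ∀ x : ℝ, (1/16) * (x ^ 2 + 3 * Real.sin x ^ 2) ≤
    (2 * x + 6 * Real.sin x * Real.cos x) ^ 2 := by
  intro x
  rcases le_or_gt 0 x with h | h
  · exact pl_key_nonneg x h
  · have := pl_key_nonneg (-x) (by linarith)
    simp only [Real.sin_neg, Real.cos_neg] at this
    nlinarith [this]

lemma pl_deriv_eq (x : ℝ) : deriv (fun x : ℝ => x ^ 2 + 3 * Real.sin x ^ 2) x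
    = 2 * x + 6 * Real.sin x * Real.cos x := by
  have h1 := hasDerivAt_pow 2 x
  have h2 := ((Real.hasDerivAt_sin x).pow 2).const_mul (3:ℝ)
  have h : HasDerivAt (fun x : ℝ => x ^ 2 + 3 * Real.sin x ^ 2)
      (2 * x + 6 * Real.sin x * Real.cos x) x := by
    refine (h1.add h2).congr_deriv ?_
    norm_num
    ring
  exact h.deriv

lemma pl_not_cvx : ¬ ConvexOn ℝ Set.univ (fun x : ℝ => x ^ 2 + 3 * Real.sin x ^ 2) := by
  intro hc
  have h := hc.2 (Set.mem_univ (Real.pi / 3)) (Set.mem_univ (2 * Real.pi / 3))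
    (by norm_num : (0:ℝ) ≤ 1/2) (by norm_num : (0:ℝ) ≤ 1/2) (by norm_num)
  simp only at h
  have hmid : (1/2 : ℝ) • (Real.pi / 3) + (1/2 : ℝ) • (2 * Real.pi / 3) = Real.pi / 2 := by
    simp [smul_eq_mul]; ring
  rw [hmid] at h
  have h1 : Real.sin (Real.pi / 3) = Real.sqrt 3 / 2 := Real.sin_pi_div_three
  have h2 : Real.sin (2 * Real.pi / 3) = Real.sqrt 3 / 2 := by
    rw [show (2 * Real.pi / 3 : ℝ) = Real.pi - Real.pi / 3 by ring, Real.sin_pi_sub,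
      Real.sin_pi_div_three]
  have h3 : Real.sin (Real.pi / 2) = 1 := Real.sin_pi_div_two
  rw [h1, h2, h3] at h
  have hs3 : Real.sqrt 3 ^ 2 = 3 := Real.sq_sqrt (by norm_num)
  have hpi := Real.pi_gt_three
  have hpi2 := Real.pi_lt_d2
  simp only [smul_eq_mul] at h
  nlinarith [h, hs3]

/-- `f x = x² + 3 sin² x` satisfies the `μ`-PL condition with `μ = 1/32`
(its infimum is `0`, attained at `0`), but is not convex on `ℝ`. -/
theorem pl_not_convex_example :
    ∃ μ : ℝ, 0 < μ ∧ μ = 1 / 32 ∧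
      (∀ x : ℝ, 2 * μ * ((x ^ 2 + 3 * Real.sin x ^ 2) - 0) ≤
        (deriv (fun x : ℝ => x ^ 2 + 3 * Real.sin x ^ 2) x) ^ 2) ∧
      ¬ ConvexOn ℝ Set.univ (fun x : ℝ => x ^ 2 + 3 * Real.sin x ^ 2) := by
  refine ⟨1/32, by norm_num, rfl, ?_, pl_not_cvx⟩
  intro x
  rw [pl_deriv_eq x]
  have := pl_key x
  linarith
end

section
/- Let f: ℝ^{d_x} × ℝ^{d_y} → ℝ be L-smooth, and suppose for every fixed x, the function y ↦ -f(x, y) satisfies the μ-PL condition (with maximum attained). Define g(x) = max_y f(x, y). Then g is L_g-smooth with L_g = L + L²/μ ≤ 2L²/μ (for μ ≤ L); in particular ‖∇g(x₁) - ∇g(x₂)‖ ≤ (L + L²/μ)‖x₁ - x₂‖ for all x₁, x₂, where ∇g(x) = ∇_x f(x, y*(x)) for any maximizer y*(x). -/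
open InnerProductSpace Filter intervalIntegral MeasureTheory

local notation "⟪" x ", " y "⟫" => @inner ℝ _ _ x y

section AuxLemmas

variable {E : Type*} [NormedAddCommGroup E] [InnerProductSpace ℝ E] [CompleteSpace E]


lemma my_descent (F : E → ℝ) (hF : Differentiable ℝ F) (L : ℝ) (hL : 0 ≤ L)
    (hlip : ∀ a b, ‖gradient F a - gradient F b‖ ≤ L * ‖a - b‖) (u v : E) :
    |F v - F u - ⟪gradient F u, v - u⟫| ≤ L / 2 * ‖v - u‖ ^ 2 := by
  set c := v - u with hc
  have hline : ∀ t : ℝ, HasDerivAt (fun t : ℝ => u + t • c) c t := fun t => by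
    simpa using ((hasDerivAt_id t).smul_const c).const_add u
  have hφ : ∀ t : ℝ, HasDerivAt (fun t : ℝ => F (u + t • c))
      ⟪gradient F (u + t • c), c⟫ t := by
    intro t
    have hfd : HasFDerivAt F (toDual ℝ E (gradient F (u + t • c))) (u + t • c) :=
      (hF (u + t • c)).hasGradientAt
    have := hfd.comp_hasDerivAt t (hline t)
    simp only [InnerProductSpace.toDual_apply_apply] at this
    exact this
  have hcont : Continuous fun a : E => gradient F a := by
    rcases le_iff_lt_or_eq.1 hL with hL' | hL'
    · exact (LipschitzWith.of_dist_le_mul (K := ⟨L, hL⟩) (fun a b => by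
        simp only [dist_eq_norm]; exact hlip a b)).continuous
    · have h0 : ∀ a : E, gradient F a = gradient F 0 := by
        intro a
        have h := hlip a 0
        rw [← hL'] at h
        simpa [norm_le_zero_iff, sub_eq_zero] using h
      exact (continuous_const : Continuous fun _ : E => gradient F 0).congr fun a => (h0 a).symm
  set ψ := fun t : ℝ => F (u + t • c) - t * ⟪gradient F u, c⟫ with hψ
  have hψ' : ∀ t : ℝ, HasDerivAt ψ
      (⟪gradient F (u + t • c), c⟫ - ⟪gradient F u, c⟫) t := by
    intro t
    rw [hψ]; exact (hφ t).sub (hasDerivAt_mul_const _)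
  have hcontD : Continuous fun t : ℝ => ⟪gradient F (u + t • c), c⟫ - ⟪gradient F u, c⟫ := by
    have : Continuous fun t : ℝ => u + t • c := by fun_prop
    exact ((hcont.comp this).inner continuous_const).sub continuous_const
  have hint : ∫ t in (0:ℝ)..1, (⟪gradient F (u + t • c), c⟫ - ⟪gradient F u, c⟫)
      = ψ 1 - ψ 0 :=
    intervalIntegral.integral_eq_sub_of_hasDerivAt (fun t _ => hψ' t)
      (hcontD.intervalIntegrable 0 1)
  have hval : ψ 1 - ψ 0 = F v - F u - ⟪gradient F u, c⟫ := by
    simp [hψ, hc]; ring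
  have hbound : ∀ᵐ t ∂(volume.restrict (Set.uIoc (0:ℝ) 1)),
      ‖⟪gradient F (u + t • c), c⟫ - ⟪gradient F u, c⟫‖ ≤ L * ‖c‖ ^ 2 * t := by
    refine (ae_restrict_iff' measurableSet_uIoc).2 (Filter.Eventually.of_forall ?_)
    intro t ht
    rw [Set.uIoc_of_le (by norm_num : (0:ℝ) ≤ 1)] at ht
    have ht0 : 0 < t := ht.1
    have h1 : ⟪gradient F (u + t • c), c⟫ - ⟪gradient F u, c⟫
        = ⟪gradient F (u + t • c) - gradient F u, c⟫ := (inner_sub_left _ _ _).symm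
    rw [h1]
    calc ‖⟪gradient F (u + t • c) - gradient F u, c⟫‖
        ≤ ‖gradient F (u + t • c) - gradient F u‖ * ‖c‖ := norm_inner_le_norm _ _
      _ ≤ (L * ‖(u + t • c) - u‖) * ‖c‖ := by gcongr; exact hlip _ _
      _ = L * ‖c‖ ^ 2 * t := by
          simp [norm_smul, abs_of_pos ht0]; ring
  have habs : ‖F v - F u - ⟪gradient F u, c⟫‖ ≤ |∫ t in (0:ℝ)..1, L * ‖c‖ ^ 2 * t| := by
    rw [← hval, ← hint]
    exact intervalIntegral.norm_integral_le_abs_of_norm_le hbound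
      (by apply Continuous.intervalIntegrable; fun_prop)
  have hcalc : ∫ t in (0:ℝ)..1, L * ‖c‖ ^ 2 * t = L * ‖c‖ ^ 2 / 2 := by
    rw [intervalIntegral.integral_const_mul, integral_id]
    ring
  rw [Real.norm_eq_abs] at habs
  rw [hcalc] at habs
  calc |F v - F u - ⟪gradient F u, c⟫| ≤ |L * ‖c‖ ^ 2 / 2| := habs
    _ = L / 2 * ‖c‖ ^ 2 := by
        rw [abs_of_nonneg (by positivity)]; ring


lemma my_hasGradientAt (g : E → ℝ) (G : E) (l : ℝ) (hl : 0 < l) (x : E)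
    (h : ∀ u, |g u - g x - ⟪G, u - x⟫| ≤ l / 2 * ‖u - x‖ ^ 2) :
    HasGradientAt g G x := by
  rw [hasGradientAt_iff_isLittleO, Asymptotics.isLittleO_iff]
  intro c hc
  filter_upwards [Metric.ball_mem_nhds x (show (0:ℝ) < 2 * c / l by positivity)] with u hu
  rw [Metric.mem_ball, dist_eq_norm] at hu
  rw [Real.norm_eq_abs]
  calc |g u - g x - ⟪G, u - x⟫| ≤ l / 2 * ‖u - x‖ ^ 2 := h u
    _ = l / 2 * ‖u - x‖ * ‖u - x‖ := by ring
    _ ≤ l / 2 * (2 * c / l) * ‖u - x‖ := by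
        have h0 : (0:ℝ) ≤ l / 2 := by positivity
        gcongr
    _ = c * ‖u - x‖ := by field_simp

lemma my_lip (g : E → ℝ) (G : E → E) (l : ℝ) (hl : 0 < l)
    (h : ∀ x u, |g u - g x - ⟪G x, u - x⟫| ≤ l / 2 * ‖u - x‖ ^ 2) (x y : E) :
    ‖G x - G y‖ ≤ l * ‖x - y‖ := by
  obtain ⟨s, hs⟩ : ∃ s, s = G y - G x := ⟨_, rfl⟩
  obtain ⟨w, hw⟩ : ∃ w, w = (1 / (2 * l)) • s := ⟨_, rfl⟩
  obtain ⟨d, hd⟩ : ∃ d, d = (1 / 2 : ℝ) • (y - x) := ⟨_, rfl⟩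
  obtain ⟨u, hu⟩ : ∃ u, u = x + d + w := ⟨_, rfl⟩
  obtain ⟨u', hu'⟩ : ∃ u', u' = x + d - w := ⟨_, rfl⟩
  have hl' : l ≠ 0 := ne_of_gt hl
  have humx : u - x = w + d := by rw [hu]; abel
  have humy : u - y = w - d := by rw [hu, hd]; module
  have hu'mx : u' - x = d - w := by rw [hu']; abel
  have hu'my : u' - y = -(w + d) := by rw [hu', hd]; module
  have h1 := (abs_le.1 (h x u)).2
  have h2 := (abs_le.1 (h y u)).1
  have h3 := (abs_le.1 (h y u')).2
  have h4 := (abs_le.1 (h x u')).1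
  have e1 : ⟪G y, u - y⟫ - ⟪G y, u' - y⟫ = ⟪G y, u - u'⟫ := by
    rw [← inner_sub_right]; congr 1; abel
  have e2 : ⟪G x, u' - x⟫ - ⟪G x, u - x⟫ = ⟪G x, u' - u⟫ := by
    rw [← inner_sub_right]; congr 1; abel
  have e2' : ⟪G x, u' - u⟫ = -⟪G x, u - u'⟫ := by
    rw [← inner_neg_right]; congr 1; abel
  have e3 : ⟪G y, u - u'⟫ - ⟪G x, u - u'⟫ = ⟪s, u - u'⟫ := by
    rw [hs, inner_sub_left]
  have key : ⟪s, u - u'⟫ ≤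
      l / 2 * (‖u - x‖ ^ 2 + ‖u - y‖ ^ 2 + ‖u' - y‖ ^ 2 + ‖u' - x‖ ^ 2) := by
    linarith [h1, h2, h3, h4, e1, e2, e2', e3]
  have e4 : l • (u - u') = s := by
    rw [hu, hu', hw]; match_scalars <;> field_simp <;> ring
  have e5 : l * ⟪s, u - u'⟫ = ‖s‖ ^ 2 := by
    rw [← real_inner_smul_right, e4, real_inner_self_eq_norm_sq]
  have n1 : ‖u - x‖ ^ 2 = ‖w‖ ^ 2 + 2 * ⟪w, d⟫ + ‖d‖ ^ 2 := by
    rw [humx]; exact norm_add_sq_real w d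
  have n2 : ‖u - y‖ ^ 2 = ‖w‖ ^ 2 - 2 * ⟪w, d⟫ + ‖d‖ ^ 2 := by
    rw [humy]; exact norm_sub_sq_real w d
  have n3 : ‖u' - x‖ ^ 2 = ‖d‖ ^ 2 - 2 * ⟪w, d⟫ + ‖w‖ ^ 2 := by
    rw [hu'mx, norm_sub_sq_real, real_inner_comm]
  have n4 : ‖u' - y‖ ^ 2 = ‖w‖ ^ 2 + 2 * ⟪w, d⟫ + ‖d‖ ^ 2 := by
    rw [hu'my, norm_neg]; exact norm_add_sq_real w d
  have nw : (2 * l) ^ 2 * ‖w‖ ^ 2 = ‖s‖ ^ 2 := by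
    rw [hw, norm_smul, Real.norm_eq_abs, abs_of_pos (by positivity)]
    field_simp
  have keyl := mul_le_mul_of_nonneg_left key hl.le
  have key2 : ‖s‖ ^ 2 ≤ 4 * l ^ 2 * ‖d‖ ^ 2 := by
    rw [n1, n2, n3, n4] at keyl
    ring_nf at keyl e5 nw ⊢
    linarith [keyl, e5, nw]
  have hdn : ‖d‖ = 1 / 2 * ‖x - y‖ := by
    rw [hd, norm_smul, Real.norm_eq_abs, norm_sub_rev]
    norm_num
  have key3 : ‖s‖ ^ 2 ≤ (l * ‖x - y‖) ^ 2 := by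
    rw [hdn] at key2
    calc ‖s‖ ^ 2 ≤ 4 * l ^ 2 * (1 / 2 * ‖x - y‖) ^ 2 := key2
      _ = (l * ‖x - y‖) ^ 2 := by ring
  have hfin : ‖s‖ ≤ l * ‖x - y‖ := by
    nlinarith [norm_nonneg s, mul_nonneg hl.le (norm_nonneg (x - y))]
  rw [norm_sub_rev, ← hs]
  exact hfin

end AuxLemmas

/-- Danskin-type smoothness of `g(x) = max_y f(x,y)` under joint `L`-smoothness of `f`
and the `μ`-PL condition of `-f(x, ·)`: `g` is `L_g`-smooth with
`L_g = L + L²/μ ≤ 2L²/μ`, and `∇g(x) = ∇ₓ f(x, y*(x))`. -/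
theorem smoothness_of_max_function (dx dy : ℕ)
    (f : EuclideanSpace ℝ (Fin dx) → EuclideanSpace ℝ (Fin dy) → ℝ)
    (hfx : ∀ y, Differentiable ℝ (fun x => f x y))
    (hfy : ∀ x, Differentiable ℝ (fun y => f x y))
    (L μ : ℝ) (hμ : 0 < μ) (hμL : μ ≤ L)
    (hsmoothx : ∀ x₁ y₁ x₂ y₂,
      ‖gradient (fun x => f x y₁) x₁ - gradient (fun x => f x y₂) x₂‖ ^ 2 ≤
        L ^ 2 * ‖x₁ - x₂‖ ^ 2 + L ^ 2 * ‖y₁ - y₂‖ ^ 2)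
    (hsmoothy : ∀ x₁ y₁ x₂ y₂,
      ‖gradient (fun y => f x₁ y) y₁ - gradient (fun y => f x₂ y) y₂‖ ^ 2 ≤
        L ^ 2 * ‖x₁ - x₂‖ ^ 2 + L ^ 2 * ‖y₁ - y₂‖ ^ 2)
    (ystar : EuclideanSpace ℝ (Fin dx) → EuclideanSpace ℝ (Fin dy))
    (hmax : ∀ x y, f x y ≤ f x (ystar x))
    (hPL : ∀ x y, 2 * μ * (f x (ystar x) - f x y) ≤ ‖gradient (fun y' => f x y') y‖ ^ 2)
    (g : EuclideanSpace ℝ (Fin dx) → ℝ) (hg : ∀ x, g x = f x (ystar x)) :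
    L + L ^ 2 / μ ≤ 2 * L ^ 2 / μ ∧
    (∀ x, gradient g x = gradient (fun x' => f x' (ystar x)) x) ∧
    (∀ x₁ x₂, ‖gradient g x₁ - gradient g x₂‖ ≤ (L + L ^ 2 / μ) * ‖x₁ - x₂‖) := by
  have hL : 0 < L := lt_of_lt_of_le hμ hμL
  have hl : 0 < L + L ^ 2 / μ := by positivity
  -- the candidate gradient of g
  set G : EuclideanSpace ℝ (Fin dx) → EuclideanSpace ℝ (Fin dx) :=
    fun x => gradient (fun x' => f x' (ystar x)) x with hG
  -- part 1
  have part1 : L + L ^ 2 / μ ≤ 2 * L ^ 2 / μ := by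
    have h1 : L ≤ L ^ 2 / μ := by
      rw [le_div_iff₀ hμ]; nlinarith
    have h2 : 2 * L ^ 2 / μ = L ^ 2 / μ + L ^ 2 / μ := by ring
    linarith
  -- gradient in y vanishes at the maximizer
  have gy0 : ∀ x, gradient (fun y => f x y) (ystar x) = 0 := by
    intro x
    have hloc : IsLocalMax (fun y => f x y) (ystar x) :=
      Filter.Eventually.of_forall (fun y => hmax x y)
    have hfd : fderiv ℝ (fun y => f x y) (ystar x) = 0 := hloc.fderiv_eq_zero
    have h1 : HasFDerivAt (fun y => f x y) (0 : EuclideanSpace ℝ (Fin dy) →L[ℝ] ℝ)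
        (ystar x) := by
      rw [← hfd]; exact (hfy x (ystar x)).hasFDerivAt
    have h2 := hasFDerivAt_iff_hasGradientAt.1 h1
    rw [h2.gradient]
    simp
  -- Lipschitzness of the x-gradient for fixed y
  have hlipx : ∀ y a b, ‖gradient (fun x' => f x' y) a - gradient (fun x' => f x' y) b‖ ≤
      L * ‖a - b‖ := by
    intro y a b
    have h := hsmoothx a y b y
    simp only [sub_self, norm_zero] at h
    nlinarith [norm_nonneg (gradient (fun x' => f x' y) a - gradient (fun x' => f x' y) b),
      mul_nonneg hL.le (norm_nonneg (a - b))]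
  -- the PL inequality transferred
  have keyPL : ∀ x u, f u (ystar u) - f u (ystar x) ≤ L ^ 2 / (2 * μ) * ‖u - x‖ ^ 2 := by
    intro x u
    have h1 := hPL u (ystar x)
    have h2 := hsmoothy u (ystar x) x (ystar x)
    rw [gy0 x] at h2
    simp only [sub_self, norm_zero, sub_zero] at h2
    have h3 : f u (ystar u) - f u (ystar x) ≤ L ^ 2 * ‖u - x‖ ^ 2 / (2 * μ) := by
      rw [le_div_iff₀ (by linarith : (0:ℝ) < 2 * μ)]
      nlinarith [h1, h2]
    calc f u (ystar u) - f u (ystar x) ≤ L ^ 2 * ‖u - x‖ ^ 2 / (2 * μ) := h3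
      _ = L ^ 2 / (2 * μ) * ‖u - x‖ ^ 2 := by ring
  -- the two-sided Bregman-type bound for g
  have sandwich : ∀ x u, |g u - g x - ⟪G x, u - x⟫| ≤
      (L + L ^ 2 / μ) / 2 * ‖u - x‖ ^ 2 := by
    intro x u
    have hd := my_descent (fun x' => f x' (ystar x)) (hfx (ystar x)) L hL.le
      (hlipx (ystar x)) x u
    have hd1 := (abs_le.1 hd).1
    have hd2 := (abs_le.1 hd).2
    have hlow : f u (ystar x) ≤ g u := by rw [hg u]; exact hmax u (ystar x)
    have hup : g u - f u (ystar x) ≤ L ^ 2 / (2 * μ) * ‖u - x‖ ^ 2 := by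
      rw [hg u]; exact keyPL x u
    have hgx : g x = f x (ystar x) := hg x
    have hnn : 0 ≤ L ^ 2 / (2 * μ) * ‖u - x‖ ^ 2 := by positivity
    have hEq : (L + L ^ 2 / μ) / 2 * ‖u - x‖ ^ 2
        = L / 2 * ‖u - x‖ ^ 2 + L ^ 2 / (2 * μ) * ‖u - x‖ ^ 2 := by ring
    rw [abs_le]
    constructor
    · rw [hEq]; simp only [hG] at *; linarith
    · rw [hEq]; simp only [hG] at *; linarith
  have hGr : ∀ x, HasGradientAt g (G x) x := fun x =>
    my_hasGradientAt g (G x) (L + L ^ 2 / μ) hl x (fun u => sandwich x u)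
  have hgrad : ∀ x, gradient g x = G x := fun x => (hGr x).gradient
  refine ⟨part1, fun x => hgrad x, fun x₁ x₂ => ?_⟩
  rw [hgrad x₁, hgrad x₂]
  exact my_lip g G (L + L ^ 2 / μ) hl sandwich x₁ x₂
end

section
/- Under the μ-PL condition, a quadratic growth property holds: if f: ℝ^d → ℝ is L-smooth and satisfies the μ-PL condition with minimizer set X* nonempty, then for all x, f(x) - f* ≥ (μ/2) dist(x, X*)², where dist(x, X*) = inf_{x* ∈ X*} ‖x - x*‖ and f* = min f. -/
open Filter Topology Set

/-- Quadratic growth under the `μ`-PL condition: if `f` is `L`-smooth, satisfies `μ`-PL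
with nonempty closed minimizer set `Xstar`, then `f(x) - f* ≥ (μ/2) dist(x, Xstar)²`. -/
theorem PL_implies_quadratic_growth (d : ℕ)
    (f : EuclideanSpace ℝ (Fin d) → ℝ) (hf : ContDiff ℝ 1 f)
    (L μ : ℝ) (hL : 0 < L) (hμ : 0 < μ)
    (hsmooth : ∀ x y, ‖gradient f x - gradient f y‖ ≤ L * ‖x - y‖)
    (fstar : ℝ) (hbelow : ∀ x, fstar ≤ f x)
    (Xstar : Set (EuclideanSpace ℝ (Fin d)))
    (hXstar : Xstar = {x | f x = fstar}) (hne : Xstar.Nonempty)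
    (hclosed : IsClosed Xstar)
    (hPL : ∀ x, 2 * μ * (f x - fstar) ≤ ‖gradient f x‖ ^ 2) :
    ∀ x, μ / 2 * (Metric.infDist x Xstar) ^ 2 ≤ f x - fstar := by
  intro x
  have hfc : Continuous f := hf.continuous
  have hfd : Differentiable ℝ f := hf.differentiable one_ne_zero
  set D : ℝ := Metric.infDist x Xstar with hD
  have hD0 : 0 ≤ D := Metric.infDist_nonneg
  have hΔ0 : 0 ≤ f x - fstar := sub_nonneg.mpr (hbelow x)
  -- Key step: for every `c` with `0 < c` and `c ^ 2 < μ / 2`, we have `c * D ≤ √(f x - f*)`.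
  have key : ∀ c : ℝ, 0 < c → c ^ 2 < μ / 2 → c * D ≤ Real.sqrt (f x - fstar) := by
    intro c hc hc2
    -- minimize `g z = √(f z - f*) + c * ‖z - x‖`
    set g : EuclideanSpace ℝ (Fin d) → ℝ :=
      fun z => Real.sqrt (f z - fstar) + c * ‖z - x‖ with hg
    have hgc : Continuous g := by
      apply Continuous.add
      · exact (hfc.sub continuous_const).sqrt
      · exact continuous_const.mul ((continuous_id.sub continuous_const).norm)
    have hcoer : Tendsto g (cocompact (EuclideanSpace ℝ (Fin d))) atTop := by
      have h1 : Tendsto (fun z : EuclideanSpace ℝ (Fin d) => c * ‖z - x‖)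
          (cocompact (EuclideanSpace ℝ (Fin d))) atTop := by
        have h2 := tendsto_dist_right_cocompact_atTop (α := EuclideanSpace ℝ (Fin d)) x
        simp only [dist_eq_norm] at h2
        exact h2.const_mul_atTop hc
      apply tendsto_atTop_mono _ h1
      intro z
      have : 0 ≤ Real.sqrt (f z - fstar) := Real.sqrt_nonneg _
      simp only [hg]; linarith
    obtain ⟨y, hy⟩ := hgc.exists_forall_le hcoer
    -- basic consequences of minimality
    have hyx : c * ‖y - x‖ ≤ Real.sqrt (f x - fstar) := by
      have h1 := hy x
      simp only [hg, sub_self, norm_zero, mul_zero, add_zero] at h1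
      have h0 : 0 ≤ Real.sqrt (f y - fstar) := Real.sqrt_nonneg _
      linarith
    have hEke : ∀ z, Real.sqrt (f y - fstar) - c * ‖z - y‖ ≤ Real.sqrt (f z - fstar) := by
      intro z
      have h1 := hy z
      have htri : ‖z - x‖ ≤ ‖z - y‖ + ‖y - x‖ := by
        have := dist_triangle z y x
        simpa [dist_eq_norm] using this
      have h2 : c * ‖z - x‖ ≤ c * (‖z - y‖ + ‖y - x‖) :=
        mul_le_mul_of_nonneg_left htri hc.le
      simp only [hg] at h1
      nlinarith
    -- claim: `f y = fstar`, i.e. `y ∈ Xstar`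
    have hymem : f y = fstar := by
      by_contra hne'
      have hg0 : 0 < f y - fstar := lt_of_le_of_ne (sub_nonneg.mpr (hbelow y))
        (fun hEq => hne' (by linarith [hEq.symm]))
      have hGne : gradient f y ≠ 0 := by
        intro h0
        have hp := hPL y
        rw [h0] at hp
        simp only [norm_zero] at hp
        nlinarith
      have hGnorm : 0 < ‖gradient f y‖ := norm_pos_iff.mpr hGne
      set G : EuclideanSpace ℝ (Fin d) := gradient f y with hG
      set v : EuclideanSpace ℝ (Fin d) := -(‖G‖⁻¹ • G) with hv
      have hvnorm : ‖v‖ = 1 := by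
        simp only [hv, norm_neg, norm_smul, norm_inv, norm_norm]
        field_simp
    -- derivative of `t ↦ f (y + t • v)` at `0` is `⟪G, v⟫ = -‖G‖`
      have hγ : HasDerivAt (fun t : ℝ => y + t • v) v 0 := by
        have h3 : HasDerivAt (fun t : ℝ => t • v) ((1:ℝ) • v) 0 :=
          (hasDerivAt_id (0:ℝ)).smul_const v
        simpa using h3.const_add y
      have hψ : HasDerivAt (fun t : ℝ => f (y + t • v)) (-‖G‖) 0 := by
        have hfy : HasFDerivAt f (fderiv ℝ f y) ((fun t : ℝ => y + t • v) 0) := by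
          simpa using (hfd y).hasFDerivAt
        have hcomp := hfy.comp_hasDerivAt 0 hγ
        have hval : fderiv ℝ f y v = -‖G‖ := by
          have h1 : fderiv ℝ f y v = inner ℝ G v := by
            rw [hG, gradient, InnerProductSpace.toDual_symm_apply]
          rw [h1, hv, inner_neg_right, real_inner_smul_right,
            real_inner_self_eq_norm_sq]
          field_simp
        rw [hval] at hcomp
        exact hcomp
      -- derivative of `φ t = √(f (y + t•v) - fstar)` at `0`
      have hsub : HasDerivAt (fun t : ℝ => f (y + t • v) - fstar) (-‖G‖) 0 :=
        hψ.sub_const fstar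
      have hsqrt : HasDerivAt Real.sqrt (1 / (2 * Real.sqrt (f y - fstar)))
          ((fun t : ℝ => f (y + t • v) - fstar) 0) := by
        have : (fun t : ℝ => f (y + t • v) - fstar) 0 = f y - fstar := by simp
        rw [this]
        exact Real.hasDerivAt_sqrt (ne_of_gt hg0)
      have hφ : HasDerivAt (fun t : ℝ => Real.sqrt (f (y + t • v) - fstar))
          (1 / (2 * Real.sqrt (f y - fstar)) * (-‖G‖)) 0 := by
        have h4 := hsqrt.comp 0 hsub
        exact h4
      -- slope lower bound on the right: `-c ≤ φ'(0)`
      have hslope : Tendsto (slope (fun t : ℝ => Real.sqrt (f (y + t • v) - fstar)) 0)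
          (𝓝[>] 0) (𝓝 (1 / (2 * Real.sqrt (f y - fstar)) * (-‖G‖))) := by
        have h5 := hasDerivAt_iff_tendsto_slope.mp hφ
        exact h5.mono_left (nhdsWithin_mono 0 (fun t ht => ne_of_gt ht))
      have hge : -c ≤ 1 / (2 * Real.sqrt (f y - fstar)) * (-‖G‖) := by
        refine ge_of_tendsto hslope ?_
        filter_upwards [self_mem_nhdsWithin] with t ht
        have ht0 : (0:ℝ) < t := ht
        have hEk := hEke (y + t • v)
        have hnorm : ‖y + t • v - y‖ = t := by
          have h6 : y + t • v - y = t • v := by abel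
          rw [h6, norm_smul, hvnorm, Real.norm_eq_abs, abs_of_pos ht0, mul_one]
        rw [hnorm] at hEk
        rw [slope_def_field, sub_zero, le_div_iff₀ ht0]
        have h7 : Real.sqrt (f (y + (0:ℝ) • v) - fstar) = Real.sqrt (f y - fstar) := by simp
        rw [h7]
        nlinarith
      -- derive a contradiction with PL
      have hsq : Real.sqrt (f y - fstar) ^ 2 = f y - fstar := Real.sq_sqrt hg0.le
      have hsqpos : 0 < Real.sqrt (f y - fstar) := Real.sqrt_pos.mpr hg0
      have hbound : ‖G‖ ≤ 2 * c * Real.sqrt (f y - fstar) := by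
        rw [div_mul_eq_mul_div, le_div_iff₀ (by positivity)] at hge
        nlinarith
      have hp := hPL y
      rw [← hG] at hp
      nlinarith [norm_nonneg G]
    -- conclude: `y ∈ Xstar`, so `D ≤ ‖y - x‖`
    have hyX : y ∈ Xstar := by rw [hXstar]; exact hymem
    have hDle : D ≤ ‖y - x‖ := by
      have h8 := Metric.infDist_le_dist_of_mem (x := x) hyX
      rw [hD]
      rwa [dist_comm, dist_eq_norm] at h8
    calc c * D ≤ c * ‖y - x‖ := mul_le_mul_of_nonneg_left hDle hc.le
      _ ≤ Real.sqrt (f x - fstar) := hyx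
  -- pass to the limit `c → √(μ/2)`
  have hs : Real.sqrt (μ / 2) * D ≤ Real.sqrt (f x - fstar) := by
    by_contra hlt
    push_neg at hlt
    have hspos : 0 < Real.sqrt (μ / 2) := Real.sqrt_pos.mpr (by linarith)
    have hDpos : 0 < D := by
      by_contra hD'
      push_neg at hD'
      have hD0' : D = 0 := le_antisymm hD' hD0
      rw [hD0', mul_zero] at hlt
      exact absurd hlt (not_lt.mpr (Real.sqrt_nonneg _))
    have hratio : Real.sqrt (f x - fstar) / D < Real.sqrt (μ / 2) := by
      rw [div_lt_iff₀ hDpos]; linarith [mul_comm D (Real.sqrt (μ / 2))]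
    obtain ⟨c, hc1, hc2⟩ := exists_between hratio
    have hcpos : 0 < c := lt_of_le_of_lt (by positivity) hc1
    have hc2' : c ^ 2 < μ / 2 := by
      have := Real.sq_sqrt (show (0:ℝ) ≤ μ / 2 by linarith)
      nlinarith
    have hk := key c hcpos hc2'
    rw [div_lt_iff₀ hDpos] at hc1
    linarith
  have hsq1 : Real.sqrt (μ / 2) ^ 2 = μ / 2 := Real.sq_sqrt (by linarith)
  have hsq2 : Real.sqrt (f x - fstar) ^ 2 = f x - fstar := Real.sq_sqrt hΔ0
  have h1 : (Real.sqrt (μ / 2) * D) * (Real.sqrt (μ / 2) * D)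
      ≤ Real.sqrt (f x - fstar) * Real.sqrt (f x - fstar) :=
    mul_self_le_mul_self (by positivity) hs
  nlinarith
end

section
/- Let f: ℝ^{d_x} × ℝ^{d_y} → ℝ be L-smooth such that -f(x,·) satisfies the μ-PL condition for each x, with g(x) = max_y f(x,y) attained. Then for all (x,y): ‖∇_x f(x, y) - ∇g(x)‖² ≤ (L²/μ) · 2(g(x) - f(x,y)), where ∇g(x) = ∇_x f(x, y*(x)) for a maximizer y*(x). -/
open InnerProductSpace

section Aux

variable {F : Type*} [NormedAddCommGroup F] [InnerProductSpace ℝ F] [CompleteSpace F]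

lemma le_of_sq_le_sq' {a b : ℝ} (hb : 0 ≤ b) (h : a ^ 2 ≤ b ^ 2) (ha : 0 ≤ a) : a ≤ b := by
  nlinarith [sq_nonneg (a - b), sq_nonneg (a + b)]

lemma grad_zero_of_max' (f : F → ℝ) (z : F) (hz : ∀ y, f y ≤ f z) : gradient f z = 0 := by
  have : IsLocalMax f z := (isMaxOn_univ_iff.mpr hz).isLocalMax Filter.univ_mem
  rw [gradient, this.fderiv_eq_zero]
  simp

lemma line_hasDerivAt (f : F → ℝ) (hf : Differentiable ℝ f) (y h : F) (s : ℝ) :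
    HasDerivAt (fun s : ℝ => f (y + s • h)) ⟪gradient f (y + s • h), h⟫_ℝ s := by
  have h1 : HasDerivAt (fun s : ℝ => y + s • h) h s := by
    simpa using ((hasDerivAt_id s).smul_const h).const_add y
  have h2 := (hf (y + s • h)).hasGradientAt.hasFDerivAt
  exact h2.comp_hasDerivAt s h1

lemma descent_abs (f : F → ℝ) (hf : Differentiable ℝ f) (L : ℝ)
    (hlip : ∀ a b, ‖gradient f a - gradient f b‖ ≤ L * ‖a - b‖) (y h : F) :
    |f (y + h) - f y - ⟪gradient f y, h⟫_ℝ| ≤ L / 2 * ‖h‖ ^ 2 := by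
  -- derivative of φ s := f (y + s•h) - s*⟪∇f y,h⟫ ∓ L/2 s² ‖h‖²
  have key : ∀ (c : ℝ), c = 1 ∨ c = -1 →
      f y - (f (y + h) - ⟪gradient f y, h⟫_ℝ) ≤ c * (c * (L / 2 * ‖h‖ ^ 2)) ∨ True := by
    intro c _; right; trivial
  -- upper bound : φ s = L/2 s²‖h‖² - (f (y+s•h) - s⟪∇f y,h⟫) is monotone on [0,1]
  have mono : ∀ (ε : ℝ), ε = 1 ∨ ε = -1 → MonotoneOn
      (fun s : ℝ => L / 2 * s ^ 2 * ‖h‖ ^ 2 - ε * (f (y + s • h) - s * ⟪gradient f y, h⟫_ℝ))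
      (Set.Icc (0:ℝ) 1) := by
    intro ε hε
    have hd : ∀ s : ℝ, HasDerivAt
        (fun s : ℝ => L / 2 * s ^ 2 * ‖h‖ ^ 2 - ε * (f (y + s • h) - s * ⟪gradient f y, h⟫_ℝ))
        (L * s * ‖h‖ ^ 2 - ε * (⟪gradient f (y + s • h), h⟫_ℝ - ⟪gradient f y, h⟫_ℝ)) s := by
      intro s
      have h1 : HasDerivAt (fun s : ℝ => L / 2 * s ^ 2 * ‖h‖ ^ 2) (L * s * ‖h‖ ^ 2) s := by
        have := ((hasDerivAt_pow 2 s).const_mul (L / 2)).mul_const (‖h‖ ^ 2)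
        exact this.congr_deriv (by ring)
      have h2 : HasDerivAt (fun s : ℝ => f (y + s • h) - s * ⟪gradient f y, h⟫_ℝ)
          (⟪gradient f (y + s • h), h⟫_ℝ - ⟪gradient f y, h⟫_ℝ) s := by
        exact (line_hasDerivAt f hf y h s).sub
          (by simpa using (hasDerivAt_id s).mul_const ⟪gradient f y, h⟫_ℝ)
      exact h1.sub (h2.const_mul ε)
    apply monotoneOn_of_deriv_nonneg (convex_Icc 0 1)
    · exact (Differentiable.continuous (fun s => (hd s).differentiableAt)).continuousOn
    · intro s hs; exact (hd s).differentiableAt.differentiableWithinAt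
    · intro s hs
      rw [(hd s).deriv]
      have hs' : 0 < s ∧ s < 1 := by
        simpa [Set.mem_Ioo] using (by rwa [interior_Icc] at hs : s ∈ Set.Ioo (0:ℝ) 1)
      have hb : |⟪gradient f (y + s • h) - gradient f y, h⟫_ℝ| ≤ L * s * ‖h‖ ^ 2 := by
        calc |⟪gradient f (y + s • h) - gradient f y, h⟫_ℝ|
            ≤ ‖gradient f (y + s • h) - gradient f y‖ * ‖h‖ := abs_real_inner_le_norm _ _
          _ ≤ (L * ‖(y + s • h) - y‖) * ‖h‖ :=
              mul_le_mul_of_nonneg_right (hlip _ _) (norm_nonneg h)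
          _ = L * s * ‖h‖ ^ 2 := by
              rw [show (y + s • h) - y = s • h by abel, norm_smul]
              simp [abs_of_pos hs'.1]; ring
      have hinner : ⟪gradient f (y + s • h) - gradient f y, h⟫_ℝ
          = ⟪gradient f (y + s • h), h⟫_ℝ - ⟪gradient f y, h⟫_ℝ := by
        rw [inner_sub_left]
      rcases hε with hε | hε <;> subst hε <;> rw [← hinner] <;>
        cases' abs_le.mp hb with hb1 hb2 <;> linarith
  have app : ∀ (ε : ℝ), ε = 1 ∨ ε = -1 →
      ε * (f (y + h) - ⟪gradient f y, h⟫_ℝ) - ε * (f y) ≤ L / 2 * ‖h‖ ^ 2 := by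
    intro ε hε
    have := mono ε hε (Set.left_mem_Icc.mpr zero_le_one) (Set.right_mem_Icc.mpr zero_le_one)
      zero_le_one
    simp only [zero_pow, one_pow] at this
    norm_num [-inner_gradient_left] at this
    linarith [this]
  have h1 := app 1 (Or.inl rfl)
  have h2 := app (-1) (Or.inr rfl)
  rw [abs_le]; constructor <;> nlinarith

set_option maxHeartbeats 4000000 in
lemma quadratic_growth (φ : F → ℝ) (hφ : Differentiable ℝ φ) (L μ : ℝ)
    (hμ : 0 < μ) (hμL : μ ≤ L)
    (hlip : ∀ a b, ‖gradient φ a - gradient φ b‖ ≤ L * ‖a - b‖)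
    (M : ℝ) (hub : ∀ y, φ y ≤ M)
    (hPL : ∀ y, 2 * μ * (M - φ y) ≤ ‖gradient φ y‖ ^ 2)
    (t : ℝ) (ht : 0 < t) (ht' : t ≤ 1 / (2 * L)) (y : F) :
    ∃ z, φ z = M ∧
      ‖z - y‖ ≤ 2 / ((1 - L * t / 2) * Real.sqrt (2 * μ)) * Real.sqrt (M - φ y) := by
  have hL : 0 < L := lt_of_lt_of_le hμ hμL
  have htL : L * t ≤ 1 / 2 := by
    rw [le_div_iff₀ (by positivity : (0:ℝ) < 2 * L)] at ht'
    nlinarith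
  set G : F → F := fun a => gradient φ a with hG
  set gap : F → ℝ := fun a => M - φ a with hgap
  have hgap0 : ∀ a, 0 ≤ gap a := fun a => sub_nonneg.mpr (hub a)
  set c : ℝ := t * (1 - L * t / 2) with hc
  have hc0 : 0 < c := by
    apply mul_pos ht
    nlinarith
  set sm : ℝ := Real.sqrt (2 * μ) with hsm
  have hsm0 : 0 < sm := Real.sqrt_pos.mpr (by positivity)
  have hsm2 : sm ^ 2 = 2 * μ := Real.sq_sqrt (by positivity)
  -- one-step decrease
  have step1 : ∀ a, gap (a + t • G a) ≤ gap a - c * ‖G a‖ ^ 2 := by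
    intro a
    have hd := abs_le.mp (descent_abs φ hφ L hlip a (t • G a))
    have h1 : ⟪gradient φ a, t • G a⟫_ℝ = t * ‖G a‖ ^ 2 := by
      rw [real_inner_smul_right]
      rw [hG, real_inner_self_eq_norm_sq]
    have h2 : ‖t • G a‖ ^ 2 = t ^ 2 * ‖G a‖ ^ 2 := by
      rw [norm_smul, mul_pow, Real.norm_eq_abs, sq_abs]
    simp only [hgap]
    have := hd.1
    rw [h1, h2] at this
    simp only [hc]
    nlinarith
  -- one-step sqrt decrease
  have step2 : ∀ a, c * sm / 2 * ‖G a‖ ≤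
      Real.sqrt (gap a) - Real.sqrt (gap (a + t • G a)) := by
    intro a
    set A := gap a
    set B := gap (a + t • G a)
    have hA0 : 0 ≤ A := hgap0 a
    have hB0 : 0 ≤ B := hgap0 _
    have hBA : B ≤ A - c * ‖G a‖ ^ 2 := step1 a
    set sA := Real.sqrt A with hsA
    set sB := Real.sqrt B with hsB
    have hsA2 : sA ^ 2 = A := Real.sq_sqrt hA0
    have hsB2 : sB ^ 2 = B := Real.sq_sqrt hB0
    have hsA0 : 0 ≤ sA := Real.sqrt_nonneg _
    have hsB0 : 0 ≤ sB := Real.sqrt_nonneg _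
    have hBAs : sB ≤ sA := Real.sqrt_le_sqrt (by nlinarith [sq_nonneg ‖G a‖])
    have hGge : sm * sA ≤ ‖G a‖ := by
      have h := hPL a
      have : Real.sqrt (2 * μ * A) ≤ Real.sqrt (‖G a‖ ^ 2) := Real.sqrt_le_sqrt h
      rwa [Real.sqrt_mul (by positivity), Real.sqrt_sq (norm_nonneg _)] at this
    rcases eq_or_lt_of_le (by positivity : (0:ℝ) ≤ sA + sB) with h0 | hpos
    · have hsAz : sA = 0 := by nlinarith
      have hsBz : sB = 0 := by nlinarith
      have hAz : A = 0 := by rw [← hsA2, hsAz]; ring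
      have hG2 : ‖G a‖ ^ 2 ≤ 0 := by nlinarith
      have hGz : ‖G a‖ = 0 := by nlinarith [sq_nonneg ‖G a‖, norm_nonneg (G a)]
      rw [hsAz, hsBz, hGz]; norm_num
    · rw [← sub_nonneg]
      have key : c * sm / 2 * ‖G a‖ * (sA + sB) ≤ (sA - sB) * (sA + sB) := by
        have h1 : (sA - sB) * (sA + sB) = A - B := by nlinarith
        have h2 : c * ‖G a‖ ^ 2 ≤ A - B := by linarith
        have h3' := mul_le_mul_of_nonneg_left hGge
          (mul_nonneg hc0.le (norm_nonneg (G a)))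
        have h3 : c * sm * sA * ‖G a‖ ≤ c * ‖G a‖ ^ 2 := by nlinarith
        have h4 : c * sm * sB * ‖G a‖ ≤ c * sm * sA * ‖G a‖ := by
          have := mul_le_mul_of_nonneg_left hBAs
            (mul_nonneg (mul_nonneg hc0.le hsm0.le) (norm_nonneg (G a)))
          nlinarith
        nlinarith
      nlinarith [key, hpos]
  -- the ascent sequence
  set seq : ℕ → F := fun n => Nat.rec y (fun _ a => a + t • G a) n with hseqdef
  have hseq : ∀ n, seq (n + 1) = seq n + t • G (seq n) := fun n => rfl
  have hseq0 : seq 0 = y := rfl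
  set r : ℝ := 1 - 2 * μ * c with hr
  have hr0 : 0 ≤ r := by
    have hct : c ≤ t := by
      rw [hc]
      nlinarith [mul_nonneg (mul_nonneg ht.le hL.le) ht.le]
    have h1 : 2 * μ * c ≤ 2 * L * t := by nlinarith
    have h2 : 2 * L * t ≤ 1 := by nlinarith
    nlinarith
  have hr1 : r < 1 := by nlinarith
  have gdecay : ∀ n, gap (seq (n + 1)) ≤ r * gap (seq n) := by
    intro n
    rw [hseq n]
    calc gap (seq n + t • G (seq n)) ≤ gap (seq n) - c * ‖G (seq n)‖ ^ 2 := step1 _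
      _ ≤ gap (seq n) - c * (2 * μ * gap (seq n)) := by
          have hPLn : 2 * μ * gap (seq n) ≤ ‖G (seq n)‖ ^ 2 := hPL (seq n)
          nlinarith
      _ = r * gap (seq n) := by rw [hr, hgap]; ring
  set sr : ℝ := Real.sqrt r with hsr
  have hsr0 : 0 ≤ sr := Real.sqrt_nonneg _
  have hsr1 : sr < 1 := by
    rw [hsr, show (1:ℝ) = Real.sqrt 1 by simp]
    exact Real.sqrt_lt_sqrt hr0 hr1
  set sgap : ℕ → ℝ := fun n => Real.sqrt (gap (seq n)) with hsgap
  have sdecay : ∀ n, sgap n ≤ sr ^ n * sgap 0 := by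
    intro n
    induction n with
    | zero => simp
    | succ k ih =>
      calc sgap (k + 1) ≤ Real.sqrt (r * gap (seq k)) := Real.sqrt_le_sqrt (gdecay k)
        _ = sr * sgap k := by rw [Real.sqrt_mul hr0]
        _ ≤ sr * (sr ^ k * sgap 0) := by
            exact mul_le_mul_of_nonneg_left ih hsr0
        _ = sr ^ (k + 1) * sgap 0 := by ring
  set K : ℝ := 2 / ((1 - L * t / 2) * sm) with hK
  have hK0 : 0 < K := by
    apply div_pos (by norm_num)
    apply mul_pos (by nlinarith) hsm0
  have hKc : K = 2 * t / (c * sm) := by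
    have h1 : 2 * t / (c * sm) = 2 / ((1 - L * t / 2) * sm) := by
      rw [hc, show 2 * t = t * 2 by ring,
        show t * (1 - L * t / 2) * sm = t * ((1 - L * t / 2) * sm) by ring]
      exact mul_div_mul_left 2 _ (ne_of_gt ht)
    rw [hK, h1]
  have stepnorm : ∀ n, ‖seq (n + 1) - seq n‖ ≤ K * (sgap n - sgap (n + 1)) := by
    intro n
    have h1 : ‖seq (n + 1) - seq n‖ = t * ‖G (seq n)‖ := by
      rw [hseq n]
      rw [show seq n + t • G (seq n) - seq n = t • G (seq n) by abel]
      rw [norm_smul, Real.norm_eq_abs, abs_of_pos ht]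
    have h2 := step2 (seq n)
    rw [h1, hKc]
    rw [div_mul_eq_mul_div, le_div_iff₀ (by positivity)]
    have e1 : sgap (n+1) = Real.sqrt (gap (seq n + t • G (seq n))) := by
      rw [show sgap (n+1) = Real.sqrt (gap (seq (n+1))) from rfl, hseq n]
    rw [e1]
    nlinarith [norm_nonneg (G (seq n))]
  have sgap_nonneg : ∀ n, 0 ≤ sgap n := fun n => Real.sqrt_nonneg _
  have partial_bound : ∀ n, ‖seq n - seq 0‖ ≤ K * (sgap 0 - sgap n) := by
    intro n
    induction n with
    | zero => simp
    | succ k ih =>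
      calc ‖seq (k + 1) - seq 0‖ ≤ ‖seq (k + 1) - seq k‖ + ‖seq k - seq 0‖ := by
            have := norm_sub_le_norm_sub_add_norm_sub (seq (k+1)) (seq k) (seq 0)
            exact this
        _ ≤ K * (sgap k - sgap (k + 1)) + K * (sgap 0 - sgap k) := add_le_add (stepnorm k) ih
        _ = K * (sgap 0 - sgap (k + 1)) := by ring
  have cauchy : CauchySeq seq := by
    apply cauchySeq_of_le_geometric sr (K * sgap 0) hsr1
    intro n
    rw [dist_eq_norm]
    calc ‖seq n - seq (n + 1)‖ = ‖seq (n + 1) - seq n‖ := norm_sub_rev _ _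
      _ ≤ K * (sgap n - sgap (n + 1)) := stepnorm n
      _ ≤ K * sgap n := by nlinarith [sgap_nonneg (n+1)]
      _ ≤ K * (sr ^ n * sgap 0) := mul_le_mul_of_nonneg_left (sdecay n) hK0.le
      _ = K * sgap 0 * sr ^ n := by ring
  obtain ⟨z, hz⟩ := cauchySeq_tendsto_of_complete cauchy
  refine ⟨z, ?_, ?_⟩
  · -- φ z = M
    have h1 : Filter.Tendsto (fun n => gap (seq n)) Filter.atTop (nhds 0) := by
      have hb : ∀ n, gap (seq n) ≤ sgap 0 ^ 2 * (sr ^ 2) ^ n := by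
        intro n
        calc gap (seq n) = sgap n ^ 2 := (Real.sq_sqrt (hgap0 (seq n))).symm
          _ ≤ (sr ^ n * sgap 0) ^ 2 := pow_le_pow_left₀ (sgap_nonneg n) (sdecay n) 2
          _ = sgap 0 ^ 2 * (sr ^ 2) ^ n := by ring
      have hsr2 : sr ^ 2 < 1 := by nlinarith
      have ht0 : Filter.Tendsto (fun n : ℕ => sgap 0 ^ 2 * (sr ^ 2) ^ n)
          Filter.atTop (nhds 0) := by
        have := (tendsto_pow_atTop_nhds_zero_of_lt_one (by positivity) hsr2).const_mul
          (sgap 0 ^ 2)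
        simpa using this
      exact squeeze_zero (fun n => hgap0 _) hb ht0
    have h2 : Filter.Tendsto (fun n => gap (seq n)) Filter.atTop (nhds (gap z)) :=
      ((hφ.continuous.tendsto z).comp hz).const_sub M
    have := tendsto_nhds_unique h2 h1
    rw [hgap] at this
    simp only at this
    linarith
  · -- distance bound
    have h1 : Filter.Tendsto (fun n => ‖seq n - seq 0‖) Filter.atTop (nhds ‖z - seq 0‖) :=
      ((continuous_norm.tendsto _).comp (hz.sub_const (seq 0)))
    have h2 : ∀ n, ‖seq n - seq 0‖ ≤ K * sgap 0 := by
      intro n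
      calc ‖seq n - seq 0‖ ≤ K * (sgap 0 - sgap n) := partial_bound n
        _ ≤ K * sgap 0 := mul_le_mul_of_nonneg_left
            (by linarith [sgap_nonneg n]) hK0.le
    have h3 := le_of_tendsto h1 (Filter.Eventually.of_forall h2)
    rw [hseq0] at h3
    have h4 : sgap 0 = Real.sqrt (gap y) := by
      rw [show sgap 0 = Real.sqrt (gap (seq 0)) from rfl, hseq0]
    rw [h4] at h3
    exact h3

end Aux

section MainAbstract
variable {X Y : Type*} [NormedAddCommGroup X] [InnerProductSpace ℝ X] [CompleteSpace X]
  [NormedAddCommGroup Y] [InnerProductSpace ℝ Y] [CompleteSpace Y]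

set_option maxHeartbeats 2000000 in
theorem main_abstract
    (f : X → Y → ℝ)
    (hfx : ∀ y, Differentiable ℝ (fun x => f x y))
    (hfy : ∀ x, Differentiable ℝ (fun y => f x y))
    (L μ : ℝ) (hμ : 0 < μ) (hμL : μ ≤ L)
    (hsmoothx : ∀ x₁ y₁ x₂ y₂,
      ‖gradient (fun x => f x y₁) x₁ - gradient (fun x => f x y₂) x₂‖ ^ 2 ≤
        L ^ 2 * (‖x₁ - x₂‖ ^ 2 + ‖y₁ - y₂‖ ^ 2))
    (hsmoothy : ∀ x₁ y₁ x₂ y₂,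
      ‖gradient (fun y => f x₁ y) y₁ - gradient (fun y => f x₂ y) y₂‖ ^ 2 ≤
        L ^ 2 * (‖x₁ - x₂‖ ^ 2 + ‖y₁ - y₂‖ ^ 2))
    (ystar : X → Y)
    (hmax : ∀ x y, f x y ≤ f x (ystar x))
    (hPL : ∀ x y, 2 * μ * (f x (ystar x) - f x y) ≤ ‖gradient (fun y' => f x y') y‖ ^ 2)
    (g : X → ℝ) (hg : ∀ x, g x = f x (ystar x)) :
    ∀ x y, ‖gradient (fun x' => f x' y) x - gradient (fun x' => f x' (ystar x)) x‖ ^ 2 ≤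
      L ^ 2 / μ * (2 * (g x - f x y)) := by
  intro x y
  have hL : 0 < L := lt_of_lt_of_le hμ hμL
  -- Lipschitz consequences of joint smoothness
  have hlipx : ∀ (z : Y) (x₁ x₂ : X),
      ‖gradient (fun x' => f x' z) x₁ - gradient (fun x' => f x' z) x₂‖ ≤ L * ‖x₁ - x₂‖ := by
    intro z x₁ x₂
    refine le_of_sq_le_sq' (by positivity) ?_ (norm_nonneg _)
    have h := hsmoothx x₁ z x₂ z
    simp only [sub_self, norm_zero] at h
    nlinarith [h]
  have hlipxy : ∀ (x' : X) (z₁ z₂ : Y),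
      ‖gradient (fun x'' => f x'' z₁) x' - gradient (fun x'' => f x'' z₂) x'‖ ≤
        L * ‖z₁ - z₂‖ := by
    intro x' z₁ z₂
    refine le_of_sq_le_sq' (by positivity) ?_ (norm_nonneg _)
    have h := hsmoothx x' z₁ x' z₂
    simp only [sub_self, norm_zero] at h
    nlinarith [h]
  have hlipy : ∀ (x' : X) (a b : Y),
      ‖gradient (fun y' => f x' y') a - gradient (fun y' => f x' y') b‖ ≤ L * ‖a - b‖ := by
    intro x' a b
    refine le_of_sq_le_sq' (by positivity) ?_ (norm_nonneg _)
    have h := hsmoothy x' a x' b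
    simp only [sub_self, norm_zero] at h
    nlinarith [h]
  have hlipyx : ∀ (z : Y) (x₁ x₂ : X),
      ‖gradient (fun y' => f x₁ y') z - gradient (fun y' => f x₂ y') z‖ ≤ L * ‖x₁ - x₂‖ := by
    intro z x₁ x₂
    refine le_of_sq_le_sq' (by positivity) ?_ (norm_nonneg _)
    have h := hsmoothy x₁ z x₂ z
    simp only [sub_self, norm_zero] at h
    nlinarith [h]
  -- quadratic growth
  have QG : ∀ t : ℝ, 0 < t → t ≤ 1 / (2 * L) → ∀ (x' : X) (y' : Y), ∃ z,
      f x' z = f x' (ystar x') ∧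
      ‖z - y'‖ ≤ 2 / ((1 - L * t / 2) * Real.sqrt (2 * μ)) *
        Real.sqrt (f x' (ystar x') - f x' y') := by
    intro t ht ht' x' y'
    exact quadratic_growth (fun y' => f x' y') (hfy x') L μ hμ hμL (hlipy x')
      (f x' (ystar x')) (hmax x') (hPL x') t ht ht' y'
  have hgradzero : ∀ (x' : X) (z : Y), f x' z = f x' (ystar x') →
      gradient (fun y' => f x' y') z = 0 := by
    intro x' z hz
    exact grad_zero_of_max' _ z (fun w => le_trans (hmax x' w) (le_of_eq hz.symm))
  set sm : ℝ := Real.sqrt (2 * μ) with hsm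
  have hsm0 : 0 < sm := Real.sqrt_pos.mpr (by positivity)
  have hsm2 : sm ^ 2 = 2 * μ := Real.sq_sqrt (by positivity)
  set t₀ : ℝ := 1 / (2 * L) with ht₀
  have ht₀0 : 0 < t₀ := by positivity
  have ht₀e : 1 - L * t₀ / 2 = 3 / 4 := by
    rw [ht₀]
    field_simp
    ring
  set K₀ : ℝ := 2 / ((1 - L * t₀ / 2) * sm) with hK₀
  have hK₀0 : 0 < K₀ := by
    rw [hK₀, ht₀e]
    positivity
  -- upper quadratic bound on g around x, for any maximizer z at x
  have upper : ∀ z : Y, f x z = f x (ystar x) → ∀ h : X,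
      f (x + h) (ystar (x + h)) ≤ f x (ystar x) + ⟪gradient (fun x' => f x' z) x, h⟫_ℝ
        + (L / 2 + K₀ * L ^ 2 / sm) * ‖h‖ ^ 2 := by
    intro z hz h
    obtain ⟨w, hw, hwd⟩ := QG t₀ ht₀0 le_rfl (x + h) z
    have hgz : gradient (fun y' => f x y') z = 0 := hgradzero x z hz
    have h1 : ‖gradient (fun y' => f (x + h) y') z‖ ≤ L * ‖h‖ := by
      have h' := hlipyx z (x + h) x
      rw [hgz, sub_zero, add_sub_cancel_left] at h'
      exact h'
    have h2 : 2 * μ * (f (x + h) (ystar (x + h)) - f (x + h) z) ≤ (L * ‖h‖) ^ 2 := by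
      refine le_trans (hPL (x + h) z) ?_
      nlinarith [h1, norm_nonneg (gradient (fun y' => f (x + h) y') z)]
    have hgap0 : 0 ≤ f (x + h) (ystar (x + h)) - f (x + h) z :=
      sub_nonneg.mpr (hmax (x + h) z)
    have h3 : Real.sqrt (f (x + h) (ystar (x + h)) - f (x + h) z) ≤ L * ‖h‖ / sm := by
      have hle : f (x + h) (ystar (x + h)) - f (x + h) z ≤ (L * ‖h‖) ^ 2 / (2 * μ) := by
        rw [le_div_iff₀ (by positivity : (0:ℝ) < 2 * μ)]
        nlinarith [h2]
      calc Real.sqrt (f (x + h) (ystar (x + h)) - f (x + h) z)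
          ≤ Real.sqrt ((L * ‖h‖) ^ 2 / (2 * μ)) := Real.sqrt_le_sqrt hle
        _ = L * ‖h‖ / sm := by
            rw [Real.sqrt_div (by positivity) , Real.sqrt_sq (by positivity), hsm]
    have h4 : ‖w - z‖ ≤ K₀ * (L * ‖h‖ / sm) :=
      le_trans hwd (mul_le_mul_of_nonneg_left h3 hK₀0.le)
    have h5 := (abs_le.mp (descent_abs (fun x' => f x' w) (hfx w) L (hlipx w) x h)).2
    have h6 : f x w ≤ f x (ystar x) := hmax x w
    have h7 : ⟪gradient (fun x' => f x' w) x, h⟫_ℝ ≤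
        ⟪gradient (fun x' => f x' z) x, h⟫_ℝ + K₀ * L ^ 2 / sm * ‖h‖ ^ 2 := by
      have hd : ‖gradient (fun x' => f x' w) x - gradient (fun x' => f x' z) x‖ ≤
          L * ‖w - z‖ := hlipxy x w z
      have hi : ⟪gradient (fun x' => f x' w) x - gradient (fun x' => f x' z) x, h⟫_ℝ ≤
          ‖gradient (fun x' => f x' w) x - gradient (fun x' => f x' z) x‖ * ‖h‖ :=
        real_inner_le_norm _ _
      have he : ⟪gradient (fun x' => f x' w) x - gradient (fun x' => f x' z) x, h⟫_ℝ =
          ⟪gradient (fun x' => f x' w) x, h⟫_ℝ - ⟪gradient (fun x' => f x' z) x, h⟫_ℝ :=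
        inner_sub_left _ _ _
      have hb : ‖gradient (fun x' => f x' w) x - gradient (fun x' => f x' z) x‖ * ‖h‖ ≤
          K₀ * L ^ 2 / sm * ‖h‖ ^ 2 := by
        calc ‖gradient (fun x' => f x' w) x - gradient (fun x' => f x' z) x‖ * ‖h‖
            ≤ (L * ‖w - z‖) * ‖h‖ := mul_le_mul_of_nonneg_right hd (norm_nonneg _)
          _ ≤ (L * (K₀ * (L * ‖h‖ / sm))) * ‖h‖ := by
              refine mul_le_mul_of_nonneg_right ?_ (norm_nonneg _)
              exact mul_le_mul_of_nonneg_left h4 hL.le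
          _ = K₀ * L ^ 2 / sm * ‖h‖ ^ 2 := by ring
      linarith [he ▸ hi]
    -- combine
    rw [← hw]
    nlinarith [h5, h6, h7]
  have lower : ∀ z : Y, f x z = f x (ystar x) → ∀ h : X,
      f x (ystar x) + ⟪gradient (fun x' => f x' z) x, h⟫_ℝ - L / 2 * ‖h‖ ^ 2 ≤
        f (x + h) (ystar (x + h)) := by
    intro z hz h
    have h5 := (abs_le.mp (descent_abs (fun x' => f x' z) (hfx z) L (hlipx z) x h)).1
    have h6 : f (x + h) z ≤ f (x + h) (ystar (x + h)) := hmax (x + h) z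
    linarith [hz]
  -- gradient constancy across maximizers
  have const : ∀ z : Y, f x z = f x (ystar x) →
      gradient (fun x' => f x' z) x = gradient (fun x' => f x' (ystar x)) x := by
    intro z hz
    set d := gradient (fun x' => f x' z) x - gradient (fun x' => f x' (ystar x)) x with hd
    set C : ℝ := L / 2 + (L / 2 + K₀ * L ^ 2 / sm) with hC
    have hC0 : 0 < C := by
      rw [hC]
      positivity
    have key : ∀ h : X, ⟪d, h⟫_ℝ ≤ C * ‖h‖ ^ 2 := by
      intro h
      have h1 := lower z hz h
      have h2 := upper (ystar x) rfl h
      have he : ⟪d, h⟫_ℝ = ⟪gradient (fun x' => f x' z) x, h⟫_ℝ -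
          ⟪gradient (fun x' => f x' (ystar x)) x, h⟫_ℝ := by
        rw [hd, inner_sub_left]
      rw [he, hC]
      linarith
    have hdz : ‖d‖ ^ 2 ≤ 0 := by
      have hk := key ((1 / (2 * C)) • d)
      rw [real_inner_smul_right, real_inner_self_eq_norm_sq, norm_smul] at hk
      rw [Real.norm_eq_abs, abs_of_pos (by positivity)] at hk
      have hCne : C ≠ 0 := ne_of_gt hC0
      have h2' : C * (1 / (2 * C) * ‖d‖) ^ 2 = 1 / (4 * C) * ‖d‖ ^ 2 := by
        field_simp
        ring
      rw [h2'] at hk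
      have h3' := mul_le_mul_of_nonneg_left hk (by positivity : (0:ℝ) ≤ 4 * C)
      have h4' : 4 * C * (1 / (2 * C) * ‖d‖ ^ 2) = 2 * ‖d‖ ^ 2 := by
        field_simp
        ring
      have h5' : 4 * C * (1 / (4 * C) * ‖d‖ ^ 2) = ‖d‖ ^ 2 := by
        field_simp
      rw [h4', h5'] at h3'
      linarith
    have : d = 0 := by
      have := le_antisymm hdz (sq_nonneg _)
      have hn : ‖d‖ = 0 := by nlinarith [norm_nonneg d]
      exact norm_eq_zero.mp hn
    exact sub_eq_zero.mp this
  -- final bound for each step size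
  set D : X := gradient (fun x' => f x' y) x - gradient (fun x' => f x' (ystar x)) x with hD
  have hgapy : 0 ≤ f x (ystar x) - f x y := sub_nonneg.mpr (hmax x y)
  set sg : ℝ := Real.sqrt (f x (ystar x) - f x y) with hsg
  have hsg0 : 0 ≤ sg := Real.sqrt_nonneg _
  have main' : ∀ t : ℝ, 0 < t → t ≤ 1 / (2 * L) →
      ‖D‖ * (1 - L * t / 2) ≤ L * (2 / sm) * sg := by
    intro t ht ht'
    obtain ⟨z, hzmax, hzd⟩ := QG t ht ht' x y
    have hcz : gradient (fun x' => f x' z) x = gradient (fun x' => f x' (ystar x)) x :=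
      const z hzmax
    have h1 : ‖D‖ ≤ L * ‖y - z‖ := by
      rw [hD, ← hcz]
      exact hlipxy x y z
    have h2 : ‖y - z‖ = ‖z - y‖ := norm_sub_rev _ _
    have htpos : 0 < 1 - L * t / 2 := by
      rw [le_div_iff₀ (by positivity : (0:ℝ) < 2 * L)] at ht'
      nlinarith
    have h3 : ‖D‖ ≤ L * (2 / ((1 - L * t / 2) * sm) * sg) := by
      rw [← hsg] at hzd
      calc ‖D‖ ≤ L * ‖y - z‖ := h1
        _ = L * ‖z - y‖ := by rw [h2]
        _ ≤ L * (2 / ((1 - L * t / 2) * sm) * sg) :=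
            mul_le_mul_of_nonneg_left hzd hL.le
    have h4 : L * (2 / ((1 - L * t / 2) * sm) * sg) * (1 - L * t / 2) =
        L * (2 / sm) * sg := by
      have hne1 : (1 - L * t / 2) ≠ 0 := ne_of_gt htpos
      have e : 2 / ((1 - L * t / 2) * sm) * (1 - L * t / 2) = 2 / sm := by
        rw [mul_comm (1 - L * t / 2) sm, ← div_div, div_mul_cancel₀ _ hne1]
      calc L * (2 / ((1 - L * t / 2) * sm) * sg) * (1 - L * t / 2)
          = L * (2 / ((1 - L * t / 2) * sm) * (1 - L * t / 2)) * sg := by ring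
        _ = L * (2 / sm) * sg := by rw [e]
    calc ‖D‖ * (1 - L * t / 2) ≤ L * (2 / ((1 - L * t / 2) * sm) * sg) * (1 - L * t / 2) :=
          mul_le_mul_of_nonneg_right h3 htpos.le
      _ = L * (2 / sm) * sg := h4
  -- take t → 0 along t_n = 1/(2 L (n+1))
  have seqle : ∀ n : ℕ, ‖D‖ * (1 - 1 / (4 * ((n : ℝ) + 1))) ≤ L * (2 / sm) * sg := by
    intro n
    have htn : (0:ℝ) < 1 / (2 * L * ((n : ℝ) + 1)) := by positivity
    have htn' : 1 / (2 * L * ((n : ℝ) + 1)) ≤ 1 / (2 * L) := by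
      apply div_le_div_of_nonneg_left (by norm_num) (by positivity)
      nlinarith [hL, (by positivity : (0:ℝ) < (n:ℝ) + 1)]
    have := main' _ htn htn'
    have he : L * (1 / (2 * L * ((n : ℝ) + 1))) / 2 = 1 / (4 * ((n : ℝ) + 1)) := by
      field_simp
      ring
    rwa [he] at this
  have tend : Filter.Tendsto (fun n : ℕ => ‖D‖ * (1 - 1 / (4 * ((n : ℝ) + 1))))
      Filter.atTop (nhds (‖D‖ * (1 - 0))) := by
    apply Filter.Tendsto.const_mul
    apply Filter.Tendsto.const_sub
    have h0 : Filter.Tendsto (fun n : ℕ => 1 / ((n : ℝ) + 1)) Filter.atTop (nhds 0) :=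
      tendsto_one_div_add_atTop_nhds_zero_nat
    have := h0.const_mul (1 / 4 : ℝ)
    simp only [mul_zero] at this
    convert this using 2 with n
    field_simp
  have hDle : ‖D‖ ≤ L * (2 / sm) * sg := by
    have := le_of_tendsto tend (Filter.Eventually.of_forall seqle)
    simpa using this
  -- square it
  rw [hg]
  have hsq : ‖D‖ ^ 2 ≤ (L * (2 / sm) * sg) ^ 2 := by
    nlinarith [hDle, norm_nonneg D, (by positivity : (0:ℝ) ≤ L * (2 / sm) * sg)]
  have hsg2 : sg ^ 2 = f x (ystar x) - f x y := Real.sq_sqrt hgapy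
  have hBe : (L * (2 / sm) * sg) ^ 2 = L ^ 2 / μ * (2 * (f x (ystar x) - f x y)) := by
    have h1 : (L * (2 / sm) * sg) ^ 2 = L ^ 2 * 4 / sm ^ 2 * sg ^ 2 := by
      field_simp
      ring
    rw [h1, hsm2, hsg2]
    field_simp
    ring
  calc ‖D‖ ^ 2 ≤ (L * (2 / sm) * sg) ^ 2 := hsq
    _ = L ^ 2 / μ * (2 * (f x (ystar x) - f x y)) := hBe

end MainAbstract

/-- Gradient bias bound via the duality gap: under joint `L`-smoothness and the
`μ`-PL condition in `y`, `‖∇ₓ f(x,y) - ∇g(x)‖² ≤ (L²/μ)·2(g(x) - f(x,y))`,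
where `g(x) = max_y f(x,y)` and `∇g(x) = ∇ₓ f(x, y*(x))`. -/
theorem grad_bias_bounded_by_duality_gap (dx dy : ℕ)
    (f : EuclideanSpace ℝ (Fin dx) → EuclideanSpace ℝ (Fin dy) → ℝ)
    (hfx : ∀ y, Differentiable ℝ (fun x => f x y))
    (hfy : ∀ x, Differentiable ℝ (fun y => f x y))
    (L μ : ℝ) (hμ : 0 < μ) (hμL : μ ≤ L)
    (hsmoothx : ∀ x₁ y₁ x₂ y₂,
      ‖gradient (fun x => f x y₁) x₁ - gradient (fun x => f x y₂) x₂‖ ^ 2 ≤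
        L ^ 2 * (‖x₁ - x₂‖ ^ 2 + ‖y₁ - y₂‖ ^ 2))
    (hsmoothy : ∀ x₁ y₁ x₂ y₂,
      ‖gradient (fun y => f x₁ y) y₁ - gradient (fun y => f x₂ y) y₂‖ ^ 2 ≤
        L ^ 2 * (‖x₁ - x₂‖ ^ 2 + ‖y₁ - y₂‖ ^ 2))
    (ystar : EuclideanSpace ℝ (Fin dx) → EuclideanSpace ℝ (Fin dy))
    (hmax : ∀ x y, f x y ≤ f x (ystar x))
    (hPL : ∀ x y, 2 * μ * (f x (ystar x) - f x y) ≤ ‖gradient (fun y' => f x y') y‖ ^ 2)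
    (g : EuclideanSpace ℝ (Fin dx) → ℝ) (hg : ∀ x, g x = f x (ystar x)) :
    ∀ x y, ‖gradient (fun x' => f x' y) x - gradient (fun x' => f x' (ystar x)) x‖ ^ 2 ≤
      L ^ 2 / μ * (2 * (g x - f x y)) := by
  exact main_abstract f hfx hfy L μ hμ hμL hsmoothx hsmoothy ystar hmax hPL g hg
end
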